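/- arXiv:2104.14180 — 4 statements merged into one kernel-verified Lean document; each statement's English description precedes it below -/
import Mathlib

section
/- Let r₁, …, r_m ∈ ℝⁿ be linearly independent vectors and let E₁, …, E_m be finite subsets of ℝⁿ such that rᵢ lies in the linear span of Eᵢ for each i = 1, …, m. Then there exist linearly independent vectors e₁, …, e_m ∈ ℝⁿ such that eᵢ ∈ Eᵢ for every i = 1, …, m. -/
/-!
Since `r` is linearly independent, some alternating form `f` satisfies `f r ≠ 0`: the
determinant of the `r`-coordinates, extended linearly to the whole space. Writing each `rᵢ`
as a combination of `Eᵢ` and expanding `f r` by multilinearity gives a sum of multiples of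
`f e` over the transversals `e` of `(Eᵢ)`, so `f e ≠ 0` for one of them; and an alternating
form vanishes on dependent families.
-/

open Finset Fintype

theorem MultilinearMap.exists_map_ne_zero_of_mem_span {R ι M N : Type*} [CommSemiring R]
    [AddCommMonoid M] [Module R M] [AddCommMonoid N] [Module R N] [Fintype ι]
    (f : MultilinearMap R (fun _ : ι => M) N) {v : ι → M} (hv : f v ≠ 0)
    {E : ι → Finset M} (hvE : ∀ i, v i ∈ Submodule.span R (E i : Set M)) :
    ∃ e : ι → M, (∀ i, e i ∈ E i) ∧ f e ≠ 0 := by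
  classical
  choose c hc using fun i => (Submodule.mem_span_finset.mp (hvE i)).imp fun _ h => h.2
  have hexpand : f v = ∑ e ∈ piFinset E, (∏ i, c i (e i)) • f e := by
    conv_lhs => rw [show v = fun i => ∑ x ∈ E i, c i x • x from funext fun i => (hc i).symm]
    rw [f.map_sum_finset]
    exact sum_congr rfl fun e _ => f.map_smul_univ _ _
  obtain ⟨e, he, hfe⟩ := exists_ne_zero_of_sum_ne_zero (hexpand ▸ hv)
  exact ⟨e, mem_piFinset.mp he, right_ne_zero_of_smul hfe⟩

theorem LinearIndependent.exists_alternatingMap_ne_zero {K M ι : Type*} [Field K]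
    [AddCommGroup M] [Module K M] [Fintype ι] [DecidableEq ι] {r : ι → M}
    (hr : LinearIndependent K r) : ∃ f : M [⋀^ι]→ₗ[K] K, f r ≠ 0 := by
  obtain ⟨φ, hφ⟩ := (Fintype.linearCombination K r).exists_leftInverse_of_injective
    (LinearMap.ker_eq_bot.mpr (linearIndependent_iff_injective_fintypeLinearCombination.mp hr))
  have hφr : φ ∘ r = Pi.basisFun K ι := funext fun i => by
    simpa [Fintype.linearCombination_apply_single] using LinearMap.congr_fun hφ (Pi.single i 1)
  refine ⟨(Pi.basisFun K ι).det.compLinearMap φ, ?_⟩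
  change (Pi.basisFun K ι).det (φ ∘ r) ≠ 0
  rw [hφr, Module.Basis.det_self]
  exact one_ne_zero

theorem LinearIndependent.exists_linearIndependent_mem_of_mem_span {K M ι : Type*} [Field K]
    [AddCommGroup M] [Module K M] [Fintype ι] {r : ι → M} (hr : LinearIndependent K r)
    {E : ι → Finset M} (hrE : ∀ i, r i ∈ Submodule.span K (E i : Set M)) :
    ∃ e : ι → M, LinearIndependent K e ∧ ∀ i, e i ∈ E i := by
  classical
  obtain ⟨f, hf⟩ := hr.exists_alternatingMap_ne_zero
  obtain ⟨e, he, hfe⟩ := f.toMultilinearMap.exists_map_ne_zero_of_mem_span hf hrE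
  exact ⟨e, Classical.byContradiction fun hdep => hfe (f.map_linearDependent e hdep), he⟩

/-- Let `r₁, …, r_m ∈ ℝⁿ` be linearly independent vectors and let
`E₁, …, E_m` be finite subsets of `ℝⁿ` such that `rᵢ` lies in the linear span of `Eᵢ` for
each `i`. Then there exist linearly independent vectors `e₁, …, e_m ∈ ℝⁿ` such that
`eᵢ ∈ Eᵢ` for every `i` (a linearly independent transversal, via Rado's theorem). -/
theorem exists_linearIndependent_transversal
    (m n : ℕ) (r : Fin m → (Fin n → ℝ)) (hr : LinearIndependent ℝ r)
    (E : Fin m → Finset (Fin n → ℝ))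
    (hrE : ∀ i, r i ∈ Submodule.span ℝ (E i : Set (Fin n → ℝ))) :
    ∃ e : Fin m → (Fin n → ℝ), LinearIndependent ℝ e ∧ ∀ i, e i ∈ E i :=
  hr.exists_linearIndependent_mem_of_mem_span hrE
end

section
/- Let L be a real m×n matrix with linearly independent rows, let C = {v in the row space of L : all coordinates of v are nonnegative}, and let F ⊆ C be a finite set such that every element of C is a finite linear combination of elements of F with nonnegative coefficients. Assume that the linear span of C has dimension m. Then the minimum of ‖TL‖₀ over all invertible real m×m matrices T with TL entrywise nonnegative exists and equals the minimum of Σ_{e∈S} ‖e‖₀ over all linearly independent subsets S ⊆ F with |S| = m. -/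
/-- The ℓ0-norm of a vector: the number of nonzero entries. -/
noncomputable def l0Vec {n : ℕ} (v : Fin n → ℝ) : ℕ := Set.ncard {j | v j ≠ 0}

/-- The ℓ0-norm of a matrix: the number of nonzero entries. -/
noncomputable def l0Mat {m n : ℕ} (A : Matrix (Fin m) (Fin n) ℝ) : ℕ :=
  Set.ncard {p : Fin m × Fin n | A p.1 p.2 ≠ 0}

/-!
A row of an admissible `T * L` lies in the cone `C`, so it is a nonnegative combination of
generators, and every generator occurring in it with a nonzero coefficient has its support inside
the support of the row. Expanding a nonzero determinant of the rows multilinearly selects one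
occurring generator per row so that the selected generators are still linearly independent; they
cost no more than `T * L`. Conversely, `m` independent generators lie in the row space, hence are
the rows of some `T * L` with `T` invertible, at exactly their cost. The dimension hypothesis makes
`C` span the row space, so `m` independent generators exist.
-/

open Submodule

theorem LinearIndependent.exists_linearIndependent_of_eq_sum {K V ι : Type*} [Field K]
    [AddCommGroup V] [Module K V] [Fintype ι] {r : ι → V}
    (hr : LinearIndependent K r) (A : ι → Finset V) (c : ι → V → K)
    (hrc : ∀ i, r i = ∑ x ∈ A i, c i x • x) :
    ∃ e : ι → V, (∀ i, e i ∈ A i ∧ c i (e i) ≠ 0) ∧ LinearIndependent K e := by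
  classical
  obtain ⟨g, hg⟩ := LinearMap.exists_extend (Module.Basis.span hr).equivFun.toLinearMap
  have hgr : ∀ i, g (r i) = Pi.basisFun K ι i := fun i => by
    simpa [Finsupp.single_eq_pi_single] using LinearMap.congr_fun hg (Module.Basis.span hr i)
  -- `g` extends the coordinates with respect to `r`, so `D` is a determinant with `D r = 1`.
  set D := (Pi.basisFun K ι).det.compLinearMap g
  have hDr : D r = 1 := by
    change (Pi.basisFun K ι).det (fun i => g (r i)) = 1
    simp only [hgr]
    exact (Pi.basisFun K ι).det_self
  have hexpand : D r = ∑ σ ∈ Fintype.piFinset A, (∏ i, c i (σ i)) • D σ := by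
    rw [show r = fun i => ∑ x ∈ A i, c i x • x from funext hrc]
    exact (D.toMultilinearMap.map_sum_finset _ _).trans
      (Finset.sum_congr rfl fun σ _ => D.map_smul_univ _ _)
  obtain ⟨σ, hσA, hσ⟩ :=
    Finset.exists_ne_zero_of_sum_ne_zero (hexpand ▸ hDr ▸ one_ne_zero)
  have hc : ∏ i, c i (σ i) ≠ 0 := left_ne_zero_of_smul hσ
  refine ⟨σ, fun i => ⟨Fintype.mem_piFinset.1 hσA i,
    Finset.prod_ne_zero_iff.1 hc i (Finset.mem_univ i)⟩, ?_⟩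
  by_contra hdep
  exact hσ (by rw [D.map_linearDependent σ hdep, smul_zero])

theorem IsLeast.of_subset_of_forall_exists_le {α : Type*} [Preorder α] {A B : Set α} {μ : α}
    (hμ : IsLeast B μ) (hBA : B ⊆ A) (hAB : ∀ a ∈ A, ∃ b ∈ B, b ≤ a) : IsLeast A μ :=
  ⟨hBA hμ.1, fun a ha => let ⟨_, hb, hba⟩ := hAB a ha; (hμ.2 hb).trans hba⟩

theorem Finset.exists_linearIndependent_card_eq_iff {K V M : Type*} [Ring K] [Nontrivial K]
    [AddCommGroup V] [Module K V] [AddCommMonoid M] (F : Finset V) (m : ℕ) (f : V → M) (k : M) :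
    (∃ S : Finset V, S ⊆ F ∧ LinearIndependent K (fun x : (S : Set V) => (x : V)) ∧
      S.card = m ∧ ∑ e ∈ S, f e = k) ↔
    ∃ e : Fin m → V, (∀ i, e i ∈ F) ∧ LinearIndependent K e ∧ ∑ i, f (e i) = k := by
  classical
  constructor
  · rintro ⟨S, hSF, hS, rfl, rfl⟩
    set ε := (S.equivFinOfCardEq rfl).symm
    refine ⟨fun i => ε i, fun i => hSF (ε i).2, hS.comp _ ε.injective, ?_⟩
    rw [← Finset.sum_coe_sort S]
    exact ε.sum_comp (fun x => f x)
  · rintro ⟨e, heF, he, rfl⟩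
    refine ⟨Finset.univ.image e, fun x hx => ?_, ?_, ?_, ?_⟩
    · obtain ⟨i, -, rfl⟩ := Finset.mem_image.1 hx
      exact heF i
    · rw [Finset.coe_image, Finset.coe_univ, Set.image_univ]
      exact (linearIndepOn_id_range_iff he.injective).2 he
    · rw [Finset.card_image_of_injective _ he.injective, Finset.card_fin]
    · exact Finset.sum_image fun i _ j _ h => he.injective h

section Matrix

variable {l m n : Type*} [Fintype m]

theorem Matrix.mul_apply_mem_span_range {K : Type*} [Semiring K] (T : Matrix l m K)
    (L : Matrix m n K) (i : l) :
    (T * L) i ∈ span K (Set.range L) := by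
  rw [Matrix.mul_apply_eq_vecMul, Matrix.vecMul_eq_sum]
  exact sum_mem fun j _ => smul_mem _ _ (subset_span ⟨j, rfl⟩)

theorem Matrix.linearIndependent_mul_of_isUnit {K : Type*} [CommRing K] [DecidableEq m]
    {T : Matrix m m K} {L : Matrix m n K} (hT : IsUnit T)
    (hL : LinearIndependent K L) : LinearIndependent K (T * L) := by
  have := (Matrix.linearIndependent_rows_of_isUnit hT).map' L.vecMulLinear
    (LinearMap.ker_eq_bot.2 (Matrix.vecMul_injective_iff.2 hL))
  rwa [show ⇑L.vecMulLinear ∘ T.row = T * L from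
    funext fun i => (Matrix.mul_apply_eq_vecMul T L i).symm] at this

theorem Matrix.exists_isUnit_mul_eq {K : Type*} [Field K] [DecidableEq m] {L A : Matrix m n K}
    (hA : LinearIndependent K A) (hAL : ∀ i, A i ∈ span K (Set.range L)) :
    ∃ T : Matrix m m K, IsUnit T ∧ T * L = A := by
  choose T hT using fun i => (mem_span_range_iff_exists_fun K).1 (hAL i)
  have hTL : Matrix.of T * L = A := by
    funext i
    rw [Matrix.mul_apply_eq_vecMul, Matrix.vecMul_eq_sum]
    exact hT i
  refine ⟨Matrix.of T, Matrix.linearIndependent_rows_iff_isUnit.1 ?_, hTL⟩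
  refine LinearIndependent.of_comp L.vecMulLinear ?_
  rwa [show ⇑L.vecMulLinear ∘ (Matrix.of T).row = A from
    funext fun i => hTL ▸ (Matrix.mul_apply_eq_vecMul _ L i).symm]

end Matrix

theorem l0Mat_eq_sum_l0Vec {m n : ℕ} (A : Matrix (Fin m) (Fin n) ℝ) :
    l0Mat A = ∑ i, l0Vec (A i) := by
  classical
  simp only [l0Mat, l0Vec, Set.ncard_eq_toFinset_card', Set.toFinset_ofPred, Finset.card_filter]
  exact Fintype.sum_prod_type _

theorem l0Vec_le_l0Vec_of_ne_zero {n : ℕ} {u v : Fin n → ℝ}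
    (h : ∀ j, u j ≠ 0 → v j ≠ 0) :
    l0Vec u ≤ l0Vec v :=
  Set.ncard_le_ncard h (Set.toFinite _)

theorem l0Vec_le_l0Vec_sum_smul {n : ℕ} {s : Finset (Fin n → ℝ)} {c : (Fin n → ℝ) → ℝ}
    (hc : ∀ x ∈ s, 0 ≤ c x) (hs : ∀ x ∈ s, ∀ j, 0 ≤ x j) {e : Fin n → ℝ}
    (he : e ∈ s) (hce : c e ≠ 0) : l0Vec e ≤ l0Vec (∑ x ∈ s, c x • x) := by
  refine l0Vec_le_l0Vec_of_ne_zero fun j hej => ne_of_gt ?_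
  calc 0 < c e * e j := mul_pos ((hc e he).lt_of_ne' hce) ((hs e he j).lt_of_ne' hej)
    _ ≤ ∑ x ∈ s, c x * x j :=
        Finset.single_le_sum (fun x hx => mul_nonneg (hc x hx) (hs x hx j)) he
    _ = (∑ x ∈ s, c x • x) j := by simp [Finset.sum_apply]

theorem exists_generators_sum_l0Vec_le_l0Mat {m n : ℕ} {L : Matrix (Fin m) (Fin n) ℝ}
    (hL : LinearIndependent ℝ L) {F : Finset (Fin n → ℝ)} (hF : ∀ v ∈ F, ∀ j, 0 ≤ v j)
    (hgen : ∀ v : Fin n → ℝ, v ∈ span ℝ (Set.range L) → (∀ j, 0 ≤ v j) →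
      ∃ c : (Fin n → ℝ) → ℝ, (∀ e, 0 ≤ c e) ∧ v = ∑ e ∈ F, c e • e)
    {T : Matrix (Fin m) (Fin m) ℝ} (hT : IsUnit T) (hTL : ∀ i j, 0 ≤ (T * L) i j) :
    ∃ e : Fin m → Fin n → ℝ, (∀ i, e i ∈ F) ∧ LinearIndependent ℝ e ∧
      ∑ i, l0Vec (e i) ≤ l0Mat (T * L) := by
  choose c hc hTLc using fun i => hgen _ (Matrix.mul_apply_mem_span_range T L i) (hTL i)
  obtain ⟨e, he, hli⟩ := (Matrix.linearIndependent_mul_of_isUnit hT hL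
    ).exists_linearIndependent_of_eq_sum (fun _ => F) c hTLc
  refine ⟨e, fun i => (he i).1, hli, ?_⟩
  rw [l0Mat_eq_sum_l0Vec]
  refine Finset.sum_le_sum fun i _ => ?_
  rw [hTLc i]
  exact l0Vec_le_l0Vec_sum_smul (fun x _ => hc i x) hF (he i).1 (he i).2

/-- (Correctness of Algorithm 1.) Let `L` be a real `m × n` matrix with
linearly independent rows, let `C = rowspace(L) ∩ (ℝ≥0)ⁿ`, and let `F ⊆ C` be a finite set
such that every element of `C` is a finite nonnegative linear combination of elements of
`F`. Assume the linear span of `C` has dimension `m`. Then the minimum of `‖T * L‖₀` over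
all invertible `T` with `T * L` entrywise nonnegative exists and equals the minimum of
`Σ_{e ∈ S} ‖e‖₀` over all linearly independent subsets `S ⊆ F` with `|S| = m`. -/
theorem min_l0_eq_min_over_generators
    (m n : ℕ) (L : Matrix (Fin m) (Fin n) ℝ) (hL : LinearIndependent ℝ L)
    (F : Finset (Fin n → ℝ))
    (hFC : ∀ v ∈ F, v ∈ Submodule.span ℝ (Set.range L) ∧ ∀ j, 0 ≤ v j)
    (hgen : ∀ v : Fin n → ℝ, v ∈ Submodule.span ℝ (Set.range L) → (∀ j, 0 ≤ v j) →
      ∃ c : (Fin n → ℝ) → ℝ, (∀ e, 0 ≤ c e) ∧ v = ∑ e ∈ F, c e • e)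
    (hdim : Module.finrank ℝ
      (Submodule.span ℝ
        {v : Fin n → ℝ | v ∈ Submodule.span ℝ (Set.range L) ∧ ∀ j, 0 ≤ v j}) = m) :
    ∃ μ : ℕ,
      IsLeast {k : ℕ | ∃ T : Matrix (Fin m) (Fin m) ℝ,
        IsUnit T ∧ (∀ i j, 0 ≤ (T * L) i j) ∧ l0Mat (T * L) = k} μ ∧
      IsLeast {k : ℕ | ∃ S : Finset (Fin n → ℝ), S ⊆ F ∧
        LinearIndependent ℝ (fun x : (S : Set (Fin n → ℝ)) => (x : Fin n → ℝ)) ∧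
        S.card = m ∧ ∑ e ∈ S, l0Vec e = k} μ := by
  classical
  have hspanC : span ℝ {v : Fin n → ℝ | v ∈ span ℝ (Set.range L) ∧ ∀ j, 0 ≤ v j} =
      span ℝ (Set.range L) :=
    eq_of_le_of_finrank_le (span_le.2 fun v hv => hv.1) (by simp [finrank_span_eq_card hL, hdim])
  have hspanF : span ℝ (Set.range L) ≤ span ℝ (F : Set (Fin n → ℝ)) := by
    rw [← hspanC, span_le]
    rintro v ⟨hv, hv0⟩
    obtain ⟨c, -, rfl⟩ := hgen v hv hv0
    exact sum_mem fun e he => smul_mem _ _ (subset_span he)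
  choose c hc using fun i => mem_span_finset.1 (hspanF (subset_span ⟨i, rfl⟩))
  obtain ⟨e₀, he₀, he₀li⟩ := hL.exists_linearIndependent_of_eq_sum (fun _ => F) c
    fun i => (hc i).2.symm
  simp only [Finset.exists_linearIndependent_card_eq_iff]
  refine ⟨_, (isLeast_csInf ?nonempty).of_subset_of_forall_exists_le ?_ ?_,
    isLeast_csInf ?nonempty⟩
  case nonempty => exact ⟨_, e₀, fun i => (he₀ i).1, he₀li, rfl⟩
  · rintro _ ⟨e, heF, he, rfl⟩
    obtain ⟨T, hT, hTL⟩ := Matrix.exists_isUnit_mul_eq he fun i => (hFC _ (heF i)).1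
    exact ⟨T, hT, fun i j => hTL ▸ (hFC _ (heF i)).2 j, by rw [l0Mat_eq_sum_l0Vec, hTL]⟩
  · rintro _ ⟨T, hT, hTL, rfl⟩
    obtain ⟨e, heF, he, hle⟩ := exists_generators_sum_l0Vec_le_l0Mat hL
      (fun v hv => (hFC v hv).2) hgen hT hTL
    exact ⟨_, ⟨e, heF, he, rfl⟩, hle⟩
end

section
/- Consider a polynomial ODE system x′ = f(x) with f_i ∈ ℝ[x₁,…,x_n], and observables x_obs = Ax for A ∈ ℝ^{s×n} with linearly independent rows. Suppose L₁, L₂ ∈ ℝ^{m×n} are both constrained linear lumpings with observables x_obs, and m is the smallest possible dimension of a constrained linear lumping with these observables. Then L₁ and L₂ have the same row space; equivalently, L₂ = T·L₁ for some invertible real m×m matrix T. -/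
open MvPolynomial

/-- `L` is a lumping of the polynomial ODE system `x' = f(x)`: `L` has full row rank and
there is a polynomial vector `g` with `L · f(x) = g(L · x)` identically. -/
def IsLumping {n m : ℕ} (f : Fin n → MvPolynomial (Fin n) ℝ)
    (L : Matrix (Fin m) (Fin n) ℝ) : Prop :=
  L.rank = m ∧ ∃ g : Fin m → MvPolynomial (Fin m) ℝ,
    ∀ i, (∑ j, C (L i j) * f j) =
      aeval (fun k : Fin m => ∑ j, C (L k j) * X j) (g i)

/-- `L` is a constrained linear lumping of `x' = f(x)` with observables `x_obs = A x`:
`L` is a lumping and every row of `A` lies in the row space of `L`. -/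
def IsCLL {n m s : ℕ} (f : Fin n → MvPolynomial (Fin n) ℝ)
    (A : Matrix (Fin s) (Fin n) ℝ) (L : Matrix (Fin m) (Fin n) ℝ) : Prop :=
  IsLumping f L ∧ ∀ i, A i ∈ Submodule.span ℝ (Set.range L)

/-!
The row spaces `V₁, V₂` of two constrained lumpings both contain the rows of `A`, so it suffices
to show that `V₁ ⊓ V₂` is again the row space of a lumping: minimality then forces
`V₁ = V₁ ⊓ V₂ = V₂`. A row space `V` is that of a lumping `L` exactly when `v · f` is invariant
under translations by `ker L = V^⊥` for every `v ∈ V`, because polynomials invariant under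
`ker L` are the polynomials in `L x`. Since `(V₁ ⊓ V₂)^⊥ = V₁^⊥ + V₂^⊥`, invariance under both
annihilators gives invariance under the annihilator of the intersection.
-/

open Module Submodule Matrix

theorem Subspace.dualCoannihilator_inf_eq {K V : Type*} [Field K] [AddCommGroup V] [Module K V]
    [FiniteDimensional K V] (W W' : Subspace K (Dual K V)) :
    (W ⊓ W').dualCoannihilator = W.dualCoannihilator ⊔ W'.dualCoannihilator := by
  conv_lhs => rw [← dualCoannihilator_dualAnnihilator_eq (W := W),
    ← dualCoannihilator_dualAnnihilator_eq (W := W'), ← dualAnnihilator_sup_eq,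
    dualAnnihilator_dualCoannihilator_eq]

section Field

variable {𝕜 : Type*} [Field 𝕜] {n m : ℕ}

theorem Matrix.linearIndependent_row_of_rank_eq {ι κ : Type*} [Fintype ι] [Fintype κ]
    {L : Matrix ι κ 𝕜} (h : L.rank = Fintype.card ι) : LinearIndependent 𝕜 L.row := by
  rw [rank_eq_finrank_span_row] at h
  exact linearIndependent_iff_card_eq_finrank_span.2 h.symm

theorem Matrix.mulVec_surjective_of_rank_eq {ι κ : Type*} [Fintype ι] [Fintype κ]
    {L : Matrix ι κ 𝕜} (h : L.rank = Fintype.card ι) : Function.Surjective L.mulVec := by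
  rw [← coe_mulVecLin, ← LinearMap.range_eq_top]
  apply eq_top_of_finrank_eq
  rw [← Matrix.rank, h, finrank_fintype_fun_eq_card]

theorem Matrix.exists_isUnit_mul_eq_of_span_row_le {ι κ : Type*} [Fintype ι] [DecidableEq ι]
    {L₁ L₂ : Matrix ι κ 𝕜} (hL₂ : LinearIndependent 𝕜 L₂.row)
    (h : span 𝕜 (Set.range L₂.row) ≤ span 𝕜 (Set.range L₁.row)) :
    ∃ T : Matrix ι ι 𝕜, IsUnit T ∧ L₂ = T * L₁ := by
  rw [← range_vecMulLinear L₁] at h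
  choose T hT using fun i => h (subset_span (Set.mem_range_self (f := L₂.row) i))
  have hTL : L₂ = of T * L₁ := funext fun i => by
    rw [mul_apply_eq_vecMul]
    exact (hT i).symm
  refine ⟨of T, vecMul_injective_iff_isUnit.1 fun v w hvw => ?_, hTL⟩
  apply vecMul_injective_iff.2 hL₂
  simp only [hTL, ← vecMul_vecMul, hvw]

theorem exists_span_row_eq (V : Submodule 𝕜 (Fin n → 𝕜)) :
    ∃ L : Matrix (Fin (finrank 𝕜 V)) (Fin n) 𝕜, span 𝕜 (Set.range L) = V := by
  let b := finBasis 𝕜 V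
  refine ⟨fun i => b i, ?_⟩
  change span 𝕜 (Set.range (V.subtype ∘ b)) = V
  rw [Set.range_comp, span_image, b.span_eq, Submodule.map_top, range_subtype]

def rowAnnihilator (V : Submodule 𝕜 (Fin n → 𝕜)) : Submodule 𝕜 (Fin n → 𝕜) :=
  (V.map (dotProductEquiv 𝕜 (Fin n)).toLinearMap).dualCoannihilator

theorem mem_rowAnnihilator {V : Submodule 𝕜 (Fin n → 𝕜)} {x : Fin n → 𝕜} :
    x ∈ rowAnnihilator V ↔ ∀ v ∈ V, v ⬝ᵥ x = 0 := by
  simp only [rowAnnihilator, mem_dualCoannihilator, mem_map, forall_exists_index, and_imp,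
    forall_apply_eq_imp_iff₂, LinearEquiv.coe_coe, dotProductEquiv_apply_apply]

theorem ker_mulVecLin_eq_rowAnnihilator (L : Matrix (Fin m) (Fin n) 𝕜) :
    LinearMap.ker L.mulVecLin = rowAnnihilator (span 𝕜 (Set.range L)) := by
  ext x
  change _ ↔ x ∈ rowAnnihilator (span 𝕜 (Set.range L.row))
  rw [mem_rowAnnihilator, LinearMap.mem_ker, mulVecLin_apply, ← range_vecMulLinear]
  simp only [LinearMap.mem_range, vecMulLinear_apply, forall_exists_index, forall_apply_eq_imp_iff,
    ← dotProduct_mulVec]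
  exact ⟨fun h c => by rw [h, dotProduct_zero],
    fun h => funext fun i => by simpa using h (Pi.single i 1)⟩

theorem rowAnnihilator_inf (V₁ V₂ : Submodule 𝕜 (Fin n → 𝕜)) :
    rowAnnihilator (V₁ ⊓ V₂) = rowAnnihilator V₁ ⊔ rowAnnihilator V₂ := by
  rw [rowAnnihilator, map_inf _ (dotProductEquiv 𝕜 (Fin n)).injective,
    Subspace.dualCoannihilator_inf_eq]
  rfl

noncomputable def linearForms (L : Matrix (Fin m) (Fin n) 𝕜) (k : Fin m) :
    MvPolynomial (Fin n) 𝕜 :=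
  ∑ j, C (L k j) * X j

theorem eval_aeval_linearForms (L : Matrix (Fin m) (Fin n) 𝕜) (q : MvPolynomial (Fin m) 𝕜)
    (x : Fin n → 𝕜) : eval x (aeval (linearForms L) q) = eval (L *ᵥ x) q := by
  have hC : (eval x).comp (algebraMap 𝕜 (MvPolynomial (Fin n) 𝕜)) = RingHom.id 𝕜 :=
    RingHom.ext fun a => eval_C a
  have hX : (fun k => eval x (linearForms L k)) = L *ᵥ x := by
    funext k
    simp [linearForms, mulVec, dotProduct]
  rw [aeval_def, eval₂_comp_left, hC]
  exact congrArg (fun v => eval₂ (RingHom.id 𝕜) v q) hX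

def IsTranslationInvariant (K : Submodule 𝕜 (Fin n → 𝕜)) (p : MvPolynomial (Fin n) 𝕜) : Prop :=
  ∀ x, ∀ k ∈ K, eval (x + k) p = eval x p

theorem IsTranslationInvariant.sup {K₁ K₂ : Submodule 𝕜 (Fin n → 𝕜)} {p : MvPolynomial (Fin n) 𝕜}
    (h₁ : IsTranslationInvariant K₁ p) (h₂ : IsTranslationInvariant K₂ p) :
    IsTranslationInvariant (K₁ ⊔ K₂) p := by
  intro x k hk
  obtain ⟨k₁, hk₁, k₂, hk₂, rfl⟩ := mem_sup.mp hk
  rw [← add_assoc, h₂ _ _ hk₂, h₁ _ _ hk₁]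

theorem isTranslationInvariant_ker_aeval_linearForms (L : Matrix (Fin m) (Fin n) 𝕜)
    (q : MvPolynomial (Fin m) 𝕜) :
    IsTranslationInvariant (LinearMap.ker L.mulVecLin) (aeval (linearForms L) q) := by
  intro x k hk
  rw [LinearMap.mem_ker, mulVecLin_apply] at hk
  simp only [eval_aeval_linearForms, mulVec_add, hk, add_zero]

theorem exists_eq_aeval_linearForms_of_isTranslationInvariant [Infinite 𝕜]
    {L : Matrix (Fin m) (Fin n) 𝕜} (hL : Function.Surjective L.mulVec)
    {p : MvPolynomial (Fin n) 𝕜} (hp : IsTranslationInvariant (LinearMap.ker L.mulVecLin) p) :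
    ∃ q : MvPolynomial (Fin m) 𝕜, p = aeval (linearForms L) q := by
  obtain ⟨R, hR⟩ := L.mulVecLin.exists_rightInverse_of_surjective (LinearMap.range_eq_top.2 hL)
  refine ⟨aeval (linearForms (LinearMap.toMatrix' R)) p, funext fun x => ?_⟩
  rw [eval_aeval_linearForms, eval_aeval_linearForms, LinearMap.toMatrix'_mulVec]
  have hker : R (L *ᵥ x) - x ∈ LinearMap.ker L.mulVecLin := by
    rw [LinearMap.mem_ker, map_sub, ← LinearMap.comp_apply, hR]
    simp
  rw [← hp x _ hker, add_sub_cancel]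

theorem eval_sum_C_mul (v : Fin n → 𝕜) (f : Fin n → MvPolynomial (Fin n) 𝕜) (x : Fin n → 𝕜) :
    eval x (∑ j, C (v j) * f j) = v ⬝ᵥ fun j => eval x (f j) := by
  simp [dotProduct]

def invariantRows (f : Fin n → MvPolynomial (Fin n) 𝕜) (K : Submodule 𝕜 (Fin n → 𝕜)) :
    Submodule 𝕜 (Fin n → 𝕜) where
  carrier := {v | IsTranslationInvariant K (∑ j, C (v j) * f j)}
  add_mem' {v w} hv hw x k hk := by
    have hv := hv x k hk
    have hw := hw x k hk
    simp only [eval_sum_C_mul, add_dotProduct] at hv hw ⊢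
    rw [hv, hw]
  zero_mem' x k _ := by simp
  smul_mem' c v hv x k hk := by
    have hv := hv x k hk
    simp only [eval_sum_C_mul, smul_dotProduct] at hv ⊢
    rw [hv]

theorem invariantRows_inf_le (f : Fin n → MvPolynomial (Fin n) 𝕜)
    (K₁ K₂ : Submodule 𝕜 (Fin n → 𝕜)) :
    invariantRows f K₁ ⊓ invariantRows f K₂ ≤ invariantRows f (K₁ ⊔ K₂) :=
  fun _ hv => IsTranslationInvariant.sup hv.1 hv.2

end Field

theorem isLumping_iff {n m : ℕ} {f : Fin n → MvPolynomial (Fin n) ℝ}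
    {L : Matrix (Fin m) (Fin n) ℝ} :
    IsLumping f L ↔
      L.rank = m ∧ span ℝ (Set.range L) ≤ invariantRows f (LinearMap.ker L.mulVecLin) := by
  refine and_congr_right fun hrank => ⟨?_, fun h => ?_⟩
  · rintro ⟨g, hg⟩
    rw [span_le]
    rintro _ ⟨i, rfl⟩
    change IsTranslationInvariant _ _
    rw [hg i]
    exact isTranslationInvariant_ker_aeval_linearForms L (g i)
  · choose g hg using fun i => exists_eq_aeval_linearForms_of_isTranslationInvariant
      (mulVec_surjective_of_rank_eq (hrank.trans (Fintype.card_fin m).symm))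
      (h (subset_span ⟨i, rfl⟩))
    exact ⟨g, hg⟩

theorem exists_isCLL_span_eq_inf {n m₁ m₂ s : ℕ} {f : Fin n → MvPolynomial (Fin n) ℝ}
    {A : Matrix (Fin s) (Fin n) ℝ} {L₁ : Matrix (Fin m₁) (Fin n) ℝ}
    {L₂ : Matrix (Fin m₂) (Fin n) ℝ} (h₁ : IsCLL f A L₁) (h₂ : IsCLL f A L₂) :
    ∃ (m : ℕ) (L : Matrix (Fin m) (Fin n) ℝ), IsCLL f A L ∧
      span ℝ (Set.range L) = span ℝ (Set.range L₁) ⊓ span ℝ (Set.range L₂) := by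
  obtain ⟨L, hL⟩ := exists_span_row_eq (span ℝ (Set.range L₁) ⊓ span ℝ (Set.range L₂))
  have hker : LinearMap.ker L.mulVecLin =
      LinearMap.ker L₁.mulVecLin ⊔ LinearMap.ker L₂.mulVecLin := by
    simp only [ker_mulVecLin_eq_rowAnnihilator, hL, rowAnnihilator_inf]
  have hA : ∀ i, A i ∈ span ℝ (Set.range L) := fun i => by
    rw [hL]
    exact mem_inf.2 ⟨h₁.2 i, h₂.2 i⟩
  refine ⟨_, L, ⟨isLumping_iff.2 ⟨?_, ?_⟩, hA⟩, hL⟩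
  · exact (rank_eq_finrank_span_row L).trans
      (congrArg (fun V : Submodule ℝ _ => finrank ℝ V) hL)
  · rw [hL, hker]
    exact (inf_le_inf (isLumping_iff.1 h₁.1).2 (isLumping_iff.1 h₂.1).2).trans
      (invariantRows_inf_le f _ _)

theorem minimal_constrained_lumpings_equivalent_general
    (n m s : ℕ) (f : Fin n → MvPolynomial (Fin n) ℝ)
    (A : Matrix (Fin s) (Fin n) ℝ)
    (L₁ L₂ : Matrix (Fin m) (Fin n) ℝ)
    (h1 : IsCLL f A L₁) (h2 : IsCLL f A L₂)
    (hmin : ∀ (m' : ℕ) (L : Matrix (Fin m') (Fin n) ℝ), IsCLL f A L → m ≤ m') :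
    Submodule.span ℝ (Set.range L₁) = Submodule.span ℝ (Set.range L₂) ∧
      ∃ T : Matrix (Fin m) (Fin m) ℝ, IsUnit T ∧ L₂ = T * L₁ := by
  have hfinrank : ∀ {k : ℕ} (L : Matrix (Fin k) (Fin n) ℝ), IsCLL f A L →
      finrank ℝ (span ℝ (Set.range L)) = k :=
    fun L hL => (rank_eq_finrank_span_row L).symm.trans hL.1.1
  obtain ⟨m', L, hL, hspan⟩ := exists_isCLL_span_eq_inf h1 h2
  have hinf : m ≤ finrank ℝ ↥(span ℝ (Set.range L₁) ⊓ span ℝ (Set.range L₂)) :=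
    calc m ≤ m' := hmin m' L hL
      _ = finrank ℝ (span ℝ (Set.range L)) := (hfinrank L hL).symm
      _ = _ := by rw [hspan]
  have hV : span ℝ (Set.range L₁) = span ℝ (Set.range L₂) :=
    (eq_of_le_of_finrank_le inf_le_left ((hfinrank L₁ h1).trans_le hinf)).symm.trans
      (eq_of_le_of_finrank_le inf_le_right ((hfinrank L₂ h2).trans_le hinf))
  exact ⟨hV, exists_isUnit_mul_eq_of_span_row_le
    (linearIndependent_row_of_rank_eq (h2.1.1.trans (Fintype.card_fin m).symm)) hV.ge⟩

/-- If `L₁, L₂` are constrained linear lumpings with observables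
`x_obs = A x` of the smallest possible dimension `m`, then they have the same row space;
equivalently `L₂ = T · L₁` for some invertible `T`. -/
theorem minimal_constrained_lumpings_equivalent
    (n m s : ℕ) (f : Fin n → MvPolynomial (Fin n) ℝ)
    (A : Matrix (Fin s) (Fin n) ℝ) (hA : LinearIndependent ℝ A)
    (L₁ L₂ : Matrix (Fin m) (Fin n) ℝ)
    (h1 : IsCLL f A L₁) (h2 : IsCLL f A L₂)
    (hmin : ∀ (m' : ℕ) (L : Matrix (Fin m') (Fin n) ℝ), IsCLL f A L → m ≤ m') :
    Submodule.span ℝ (Set.range L₁) = Submodule.span ℝ (Set.range L₂) ∧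
      ∃ T : Matrix (Fin m) (Fin m) ℝ, IsUnit T ∧ L₂ = T * L₁ :=
  minimal_constrained_lumpings_equivalent_general n m s f A L₁ L₂ h1 h2 hmin
end

section
/- Consider the polynomial ODE system x₁′ = x₁² + x₂², x₂′ = 2x₁x₂. Then L = (1, −1) defines a lumping y = x₁ − x₂ of dimension 1 with reduced equation y′ = y², i.e., (x₁² + x₂²) − 2x₁x₂ = (x₁ − x₂)² identically; moreover, there is no invertible real 1×1 matrix T = (c) such that TL = (c, −c) has all entries nonnegative, so this lumping admits no equivalent lumping with nonnegative coefficients. -/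
open MvPolynomial

/-- For the polynomial ODE system `x₁' = x₁² + x₂², x₂' = 2 x₁ x₂`, the
matrix `L = (1, -1)` defines a lumping `y = x₁ - x₂` of dimension `1` with reduced equation
`y' = y²`, i.e. `(x₁² + x₂²) - 2 x₁ x₂ = (x₁ - x₂)²` identically; moreover, there is no
invertible real `1 × 1` matrix `T` such that `T * L` has all entries nonnegative, so this
lumping admits no equivalent lumping with nonnegative coefficients. -/
theorem non_positivizable_lumping_example
    (f : Fin 2 → MvPolynomial (Fin 2) ℝ)
    (hf0 : f 0 = X 0 ^ 2 + X 1 ^ 2) (hf1 : f 1 = 2 * (X 0 * X 1))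
    (L : Matrix (Fin 1) (Fin 2) ℝ) (hL : L = !![1, -1]) :
    L.rank = 1 ∧
      (∀ i : Fin 1, (∑ j, C (L i j) * f j) =
        aeval (fun k : Fin 1 => ∑ j, C (L k j) * X j) ((X i : MvPolynomial (Fin 1) ℝ) ^ 2)) ∧
      ¬ ∃ T : Matrix (Fin 1) (Fin 1) ℝ, IsUnit T ∧ ∀ i j, 0 ≤ (T * L) i j := by
  subst hL
  refine ⟨?_, ?_, ?_⟩
  · have h1 : (!![1, -1] : Matrix (Fin 1) (Fin 2) ℝ).rank ≤ 1 := by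
      simpa using Matrix.rank_le_card_height (!![1, -1] : Matrix (Fin 1) (Fin 2) ℝ)
    have h0 : 0 < (!![1, -1] : Matrix (Fin 1) (Fin 2) ℝ).rank := by
      rw [Matrix.rank]
      rw [Module.finrank_pos_iff_exists_ne_zero]
      refine ⟨⟨(!![1, -1] : Matrix (Fin 1) (Fin 2) ℝ).mulVecLin (fun j => if j = 0 then 1 else 0),
        ⟨_, rfl⟩⟩, ?_⟩
      intro h
      have := congrFun (Subtype.mk_eq_mk.mp h) 0
      simp [Matrix.mulVecLin_apply, Matrix.mulVec, dotProduct, Fin.sum_univ_two] at this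
    omega
  · intro i
    have hi : i = 0 := Subsingleton.elim i 0
    subst hi
    have e0 : (!![1, -1] : Matrix (Fin 1) (Fin 2) ℝ) 0 0 = 1 := rfl
    have e1 : (!![1, -1] : Matrix (Fin 1) (Fin 2) ℝ) 0 1 = -1 := rfl
    simp only [hf0, hf1, e0, e1, Fin.sum_univ_two, Matrix.cons_val', Matrix.cons_val_zero, Matrix.cons_val_one,
      Matrix.head_cons, Matrix.empty_val', Matrix.cons_val_fin_one, map_pow, aeval_X, map_one,
      map_neg]
    ring
  · rintro ⟨T, hT, hpos⟩
    have hdet : T.det ≠ 0 := by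
      simpa [isUnit_iff_ne_zero] using (Matrix.isUnit_iff_isUnit_det T).mp hT
    have hdet' : T.det = T 0 0 := by
      simp [Matrix.det_fin_one]
    have h0 := hpos 0 0
    have h1 := hpos 0 1
    simp [Matrix.mul_apply, Fin.sum_univ_one] at h0 h1
    have : T 0 0 = 0 := le_antisymm h1 h0
    exact hdet (hdet' ▸ this)
end
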